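/- arXiv:1911.06484 — 2 statements merged into one kernel-verified Lean document; each statement's English description precedes it below -/
import Mathlib

section
/- Let R : V → V → V → V be a trilinear map satisfying R(X,Y)ξ = η(X)Y − η(Y)X for all X, Y ∈ V (the Kenmotsu curvature property). Define R̃ : V → V → V → V by R̃(X,Y)Z = R(X,Y)Z + g(Y,Z)X − g(X,Z)Y + 2(g(Y,Z)η(X) − g(X,Z)η(Y))ξ. Then R̃(X,Y)ξ = 0 for all X, Y ∈ V. (Theorem 3.1: every (2n+1)-dimensional Kenmotsu manifold equipped with the non-symmetric non-metric connection ∇̃ is irregular with respect to ∇̃.) -/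
open RealInnerProductSpace

/-- Theorem 3.1: every (2n+1)-dimensional Kenmotsu manifold equipped with the
non-symmetric non-metric connection ∇̃ is irregular: R̃(X,Y)ξ = 0. -/
theorem kenmotsu_irregular
    {V : Type*} [NormedAddCommGroup V] [InnerProductSpace ℝ V]
    [FiniteDimensional ℝ V]
    (n : ℕ) (hn : 0 < n) (hdim : Module.finrank ℝ V = 2 * n + 1)
    (ξ : V) (hξ : ‖ξ‖ = 1)
    (η : V → ℝ) (hη : ∀ X, η X = ⟪X, ξ⟫)
    (R : V →ₗ[ℝ] V →ₗ[ℝ] V →ₗ[ℝ] V)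
    (hR : ∀ X Y, R X Y ξ = η X • Y - η Y • X)
    (R' : V → V → V → V)
    (hR' : ∀ X Y Z, R' X Y Z =
      R X Y Z + ⟪Y, Z⟫ • X - ⟪X, Z⟫ • Y
        + (2 * (⟪Y, Z⟫ * η X - ⟪X, Z⟫ * η Y)) • ξ) :
    ∀ X Y, R' X Y ξ = 0 := by
  intro X Y
  rw [hR' X Y ξ, hR X Y, hη X, hη Y]
  module
end

section
/- Let S : V × V → ℝ be a symmetric bilinear form satisfying S(X, ξ) = −2n·η(X) for all X ∈ V (the Kenmotsu Ricci property), and suppose that for all X, Y, Z, U ∈ V the identity −g(Y,Z)S(X,U) + g(X,Z)S(Y,U) − g(Y,U)S(Z,X) + g(X,U)S(Z,Y) = 0 holds (equation (4.2), which the paper derives from the condition R̃·S̃ = R·S). Then S(Z,X) = −2n·g(Z,X) for all Z, X ∈ V; that is, the manifold is an Einstein manifold. Moreover, the scalar curvature r = trace(Q), where Q : V → V is the linear map with g(Q(Y),Z) = S(Y,Z), equals −2n(2n+1). (Theorem 4.1, first part.) -/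
open RealInnerProductSpace

/-- Theorem 4.1 (first part): if the Ricci tensor S of a Kenmotsu manifold
(so S(X,ξ) = −2n·η(X)) satisfies equation (4.2), then S = −2n·g (the manifold
is Einstein) and the scalar curvature is r = −2n(2n+1). -/
theorem ricci_semisymmetric_einstein
    {V : Type*} [NormedAddCommGroup V] [InnerProductSpace ℝ V]
    [FiniteDimensional ℝ V]
    (n : ℕ) (hn : 0 < n) (hdim : Module.finrank ℝ V = 2 * n + 1)
    (ξ : V) (hξ : ‖ξ‖ = 1)
    (η : V → ℝ) (hη : ∀ X, η X = ⟪X, ξ⟫)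
    (S : V →ₗ[ℝ] V →ₗ[ℝ] ℝ)
    (hsymm : ∀ X Y, S X Y = S Y X)
    (hSξ : ∀ X, S X ξ = -(2 * (n : ℝ)) * η X)
    (h42 : ∀ X Y Z U, -⟪Y, Z⟫ * S X U + ⟪X, Z⟫ * S Y U
      - ⟪Y, U⟫ * S Z X + ⟪X, U⟫ * S Z Y = 0)
    (Q : V →ₗ[ℝ] V) (hQ : ∀ Y Z, ⟪Q Y, Z⟫ = S Y Z) :
    (∀ Z X, S Z X = -(2 * (n : ℝ)) * ⟪Z, X⟫) ∧
      LinearMap.trace ℝ V Q = -(2 * (n : ℝ)) * (2 * (n : ℝ) + 1) := by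
  have hξξ : ⟪ξ, ξ⟫ = (1 : ℝ) := by
    rw [real_inner_self_eq_norm_sq, hξ]; norm_num
  have hSξξ : S ξ ξ = -(2 * (n : ℝ)) := by
    rw [hSξ, hη, hξξ]; ring
  have key : ∀ Z X, S Z X = -(2 * (n : ℝ)) * ⟪Z, X⟫ := by
    intro Z X
    have h := h42 X ξ Z ξ
    rw [hξξ, hSξξ, hSξ X, hη X, hSξ Z, hη Z] at h
    have hX : ⟪X, ξ⟫ = ⟪ξ, X⟫ := real_inner_comm _ _
    have hZ : ⟪Z, ξ⟫ = ⟪ξ, Z⟫ := real_inner_comm _ _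
    have hZX : ⟪Z, X⟫ = ⟪X, Z⟫ := real_inner_comm _ _
    rw [hZ] at h
    linear_combination -h + 2*(n:ℝ)*hZX
  refine ⟨key, ?_⟩
  have hQeq : Q = -(2 * (n : ℝ)) • LinearMap.id := by
    ext Y
    apply ext_inner_right ℝ
    intro Z
    rw [hQ, key]
    simp [real_inner_smul_left]
  rw [hQeq]
  simp [LinearMap.trace_id, hdim]
end
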